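/- Recursive equivalence of Globally-Until: for ψ = G( ⋀_{i∈I} (q_i U r_i) ) with I finite, any i ∈ I, and q̃_i := q_i ∧ w_i, r̃_i := r_i ∧ w_i where w_i := ⋀_{j ≠ i} (q_j ∨ r_j), the robustness scores agree on every infinite trajectory: ρ_{[ψ]}(x_{0:∞}) = ρ_{[q̃_i U (r̃_i ∧ X ψ)]}(x_{0:∞}). -/

import Mathlib

variable {X : Type*} {ι : Type*}

/-- Suffix (time shift) of an infinite trajectory. -/
def shift (x : ℕ → X) (t : ℕ) : ℕ → X := fun n => x (n + t)

/-- The candidate term at witness time `t` in the quantitative semantics of `q U r`. -/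
noncomputable def untilTerm (q : X → EReal) (r : (ℕ → X) → EReal) (x : ℕ → X) (t : ℕ) : EReal :=
  min (r (shift x t)) (⨅ k : Fin t, q (x k))

/-- Robustness of `q U r` on an infinite trajectory. -/
noncomputable def untilRob (q : X → EReal) (r : (ℕ → X) → EReal) (x : ℕ → X) : EReal :=
  ⨆ t : ℕ, untilTerm q r x t

/-- Robustness of `G(⋀_{i∈I} (q_i U r_i))` with propositional operands `q_i, r_i`. -/
noncomputable def GUrob (q r : ι → X → EReal) (x : ℕ → X) : EReal :=
  ⨅ t : ℕ, ⨅ i : ι, untilRob (q i) (fun y => r i (y 0)) (shift x t)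

/-- The side condition `w_i = ⋀_{j ≠ i} (q_j ∨ r_j)`. -/
noncomputable def wSide (q r : ι → X → EReal) (i : ι) (z : X) : EReal :=
  ⨅ j : ι, ⨅ _ : j ≠ i, max (q j z) (r j z)

/- Auxiliary lemmas -/

lemma shift_app (x : ℕ → X) (s n : ℕ) : shift x s n = x (n + s) := rfl

lemma shift_shift' (x : ℕ → X) (s t : ℕ) : shift (shift x s) t = shift x (t + s) := by
  funext n; show x (n + t + s) = x (n + (t + s)); exact congrArg x (by omega)

lemma shift_zero' (x : ℕ → X) : shift x 0 = x := funext fun n => congrArg x (by omega)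

lemma untilTerm_prop (q rr : X → EReal) (x : ℕ → X) (t : ℕ) :
    untilTerm q (fun y => rr (y 0)) x t = min (rr (x t)) (⨅ k : Fin t, q (x k)) := by
  have h : shift x t 0 = x t := congrArg x (by omega)
  simp only [untilTerm, h]

lemma GUrob_le (q r : ι → X → EReal) (y : ℕ → X) (s : ℕ) (j : ι) :
    GUrob q r y ≤ untilRob (q j) (fun z => r j (z 0)) (shift y s) :=
  iInf_le_of_le s (iInf_le _ j)

lemma exists_untilRob_witness (q rr : X → EReal)
    (hq : (Set.range q).Finite) (hr : (Set.range rr).Finite) (x : ℕ → X) :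
    ∃ t, untilRob q (fun y => rr (y 0)) x = untilTerm q (fun y => rr (y 0)) x t := by
  have hsub : Set.range (fun t => untilTerm q (fun y => rr (y 0)) x t)
      ⊆ Set.image2 min (Set.range rr) (insert ⊤ (Set.range q)) := by
    rintro v ⟨t, rfl⟩
    simp only [untilTerm_prop]
    refine Set.mem_image2_of_mem ⟨x t, rfl⟩ ?_
    rcases Nat.eq_zero_or_pos t with h0 | hpos
    · subst h0
      simp
    · have : Nonempty (Fin t) := ⟨⟨0, hpos⟩⟩
      obtain ⟨k, hk⟩ := Set.Nonempty.csInf_mem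
        (Set.range_nonempty fun k : Fin t => q (x k)) (Set.finite_range _)
      rw [← sInf_range, ← hk]
      exact Set.mem_insert_of_mem _ ⟨x k, rfl⟩
  have hfin : (Set.range (fun t => untilTerm q (fun y => rr (y 0)) x t)).Finite :=
    (Set.Finite.image2 _ hr (hq.insert ⊤)).subset hsub
  obtain ⟨t, ht⟩ := Set.Nonempty.csSup_mem (Set.range_nonempty _) hfin
  exact ⟨t, by rw [untilRob, ← sSup_range, ← ht]⟩

/-- recursive equivalence of Globally-Until: for ψ = G(⋀_i q_i U r_i),
any i, q̃_i = q_i ∧ w_i and r̃_i = r_i ∧ w_i,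
ρ_{[ψ]}(x_{0:∞}) = ρ_{[q̃_i U (r̃_i ∧ X ψ)]}(x_{0:∞}) on every infinite trajectory. -/
theorem GU_recursive_equivalence [Fintype ι] [Nonempty ι]
    (q r : ι → X → EReal)
    (hq : ∀ i, (Set.range (q i)).Finite) (hr : ∀ i, (Set.range (r i)).Finite)
    (i : ι) (x : ℕ → X) :
    GUrob q r x =
      untilRob (fun z => min (q i z) (wSide q r i z))
        (fun y => min (min (r i (y 0)) (wSide q r i (y 0))) (GUrob q r (shift y 1))) x := by
  classical
  set w := wSide q r i with hwdef
  set qt : X → EReal := fun z => min (q i z) (w z) with hqt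
  set rt : (ℕ → X) → EReal :=
    fun y => min (min (r i (y 0)) (w (y 0))) (GUrob q r (shift y 1)) with hrt
  have hterm : ∀ (y : ℕ → X) (t : ℕ), untilTerm qt rt y t
      = min (min (min (r i (y t)) (w (y t))) (GUrob q r (shift y (t+1))))
          (⨅ k : Fin t, min (q i (y k)) (w (y k))) := by
    intro y t
    have h1 : shift y t 0 = y t := congrArg y (by omega)
    have h2 : shift (shift y t) 1 = shift y (t + 1) :=
      (shift_shift' y t 1).trans (congrArg (shift y) (by omega))
    simp only [untilTerm, hrt, hqt, h1, h2]
  -- lower bounds from GUrob q r x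
  have hGlow : ∀ s : ℕ, GUrob q r x ≤ GUrob q r (shift x s) := by
    intro s
    refine le_iInf fun t => le_iInf fun j => ?_
    rw [shift_shift']
    exact GUrob_le q r x (t + s) j
  have hUmax : ∀ (s : ℕ) (j : ι),
      untilRob (q j) (fun y => r j (y 0)) (shift x s) ≤ max (q j (x s)) (r j (x s)) := by
    intro s j
    refine iSup_le fun t => ?_
    rw [untilTerm_prop]
    simp only [shift_app]
    cases t with
    | zero =>
      refine (min_le_left _ _).trans ?_
      rw [Nat.zero_add]
      exact le_max_right _ _
    | succ m =>
      refine (min_le_right _ _).trans ((iInf_le _ (⟨0, Nat.succ_pos m⟩ : Fin (m+1))).trans ?_)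
      show q j (x (0 + s)) ≤ _
      rw [Nat.zero_add]
      exact le_max_left _ _
  have hwle : ∀ (z : X) (j : ι), j ≠ i → w z ≤ max (q j z) (r j z) := by
    intro z j hj
    rw [hwdef, wSide]
    exact iInf_le_of_le j (iInf_le _ hj)
  have hcw : ∀ s : ℕ, GUrob q r x ≤ w (x s) := by
    intro s
    rw [hwdef, wSide]
    exact le_iInf fun j => le_iInf fun hj => (GUrob_le q r x s j).trans (hUmax s j)
  -- direction 1: GUrob ≤ untilRob qt rt x
  have h1 : GUrob q r x ≤ untilRob qt rt x := by
    obtain ⟨t, ht⟩ := exists_untilRob_witness (q i) (r i) (hq i) (hr i) x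
    have hcit : GUrob q r x ≤ min (r i (x t)) (⨅ k : Fin t, q i (x k)) := by
      rw [← untilTerm_prop, ← ht]
      have h := GUrob_le q r x 0 i
      rwa [shift_zero'] at h
    refine le_iSup_of_le t ?_
    rw [hterm]
    refine le_min (le_min (le_min ?_ (hcw t)) (hGlow (t+1)))
      (le_iInf fun k => le_min ?_ (hcw k))
    · exact hcit.trans (min_le_left _ _)
    · exact (hcit.trans (min_le_right _ _)).trans (iInf_le _ k)
  -- direction 2: untilRob qt rt x ≤ GUrob
  have h2 : untilRob qt rt x ≤ GUrob q r x := by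
    refine iSup_le fun t => ?_
    rw [hterm]
    set T := min (min (min (r i (x t)) (w (x t))) (GUrob q r (shift x (t+1))))
      (⨅ k : Fin t, min (q i (x k)) (w (x k))) with hTdef
    have hTr : T ≤ r i (x t) :=
      ((min_le_left _ _).trans (min_le_left _ _)).trans (min_le_left _ _)
    have hTG : T ≤ GUrob q r (shift x (t+1)) := (min_le_left _ _).trans (min_le_right _ _)
    have hTq : ∀ k : ℕ, k < t → T ≤ q i (x k) := fun k hk =>
      ((min_le_right _ _).trans (iInf_le _ (⟨k, hk⟩ : Fin t))).trans (min_le_left _ _)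
    have hTwk : ∀ k : ℕ, k ≤ t → T ≤ w (x k) := by
      intro k hk
      rcases eq_or_lt_of_le hk with h | h
      · subst h
        exact ((min_le_left _ _).trans (min_le_left _ _)).trans (min_le_right _ _)
      · exact ((min_le_right _ _).trans (iInf_le _ (⟨k, h⟩ : Fin t))).trans (min_le_right _ _)
    refine le_iInf fun s => le_iInf fun j => ?_
    by_cases hst : t + 1 ≤ s
    · have h := hTG.trans (GUrob_le q r (shift x (t+1)) (s - (t+1)) j)
      rwa [shift_shift', show s - (t+1) + (t+1) = s from by omega] at h
    · push_neg at hst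
      have hst' : s ≤ t := by omega
      by_cases hji : j = i
      · subst hji
        refine le_iSup_of_le (t - s) ?_
        rw [untilTerm_prop]
        simp only [shift_app]
        refine le_min ?_ (le_iInf fun m => ?_)
        · rw [show t - s + s = t from by omega]
          exact hTr
        · exact hTq (↑m + s) (by have := m.2; omega)
      · obtain ⟨τ, hτ⟩ := exists_untilRob_witness (q j) (r j) (hq j) (hr j) (shift x (t+1))
        have hTU : T ≤ min (r j (shift x (t+1) τ)) (⨅ m : Fin τ, q j (shift x (t+1) ↑m)) := by
          rw [← untilTerm_prop, ← hτ]
          refine hTG.trans ?_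
          conv_rhs => rw [← shift_zero' (shift x (t+1))]
          exact GUrob_le q r (shift x (t+1)) 0 j
        simp only [shift_app] at hTU
        have hTrj : T ≤ r j (x (τ + (t+1))) := hTU.trans (min_le_left _ _)
        have hTqj : ∀ m : ℕ, m < τ → T ≤ q j (x (m + (t+1))) := fun m hm =>
          (hTU.trans (min_le_right _ _)).trans (iInf_le _ (⟨m, hm⟩ : Fin τ))
        have hTmax : ∀ k : ℕ, s ≤ k → k ≤ t → T ≤ max (q j (x k)) (r j (x k)) :=
          fun k _ hk2 => (hTwk k hk2).trans (hwle _ j hji)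
        have hPw : T ≤ r j (x (τ + (t+1) - s + s)) := by
          rw [show τ + (t+1) - s + s = τ + (t+1) from by omega]
          exact hTrj
        have hPex : ∃ m : ℕ, T ≤ r j (x (m + s)) := ⟨τ + (t+1) - s, hPw⟩
        have hMle : Nat.find hPex ≤ τ + (t+1) - s := Nat.find_le hPw
        refine le_iSup_of_le (Nat.find hPex) ?_
        rw [untilTerm_prop]
        simp only [shift_app]
        refine le_min (Nat.find_spec hPex) (le_iInf fun k => ?_)
        have hkM : (k : ℕ) < Nat.find hPex := k.2
        have hnP : ¬ T ≤ r j (x (↑k + s)) := Nat.find_min hPex hkM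
        by_cases hkt : (k : ℕ) + s ≤ t
        · rcases le_max_iff.mp (hTmax (↑k + s) (by omega) hkt) with h | h
          · exact h
          · exact absurd h hnP
        · have hlt : (k : ℕ) + s - (t+1) < τ := by omega
          have h := hTqj ((k : ℕ) + s - (t+1)) hlt
          rwa [show (k : ℕ) + s - (t+1) + (t+1) = (k : ℕ) + s from by omega] at h
  exact le_antisymm h1 h2
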